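/- Let X be a uniquely arcwise connected continuum and let Y ⊆ X be either a tree, or the image of an oscillatory ray, or the image of a bi-sided-oscillatory line in X, with quasi-retraction r_Y : X → Y. If Z is an arcwise connected subset of Y, then r_Y⁻¹(Z) is an arcwise connected subset of X. -/

import Mathlib

/-!
All three kinds of `Y` are arcwise connected. The quasi-retraction onto an arcwise connected
`Y` is unique, hence constant along each arc `[x, r x]`: a second candidate `y'` would make
`[x, r x] ∪ [r x, y']` a second arc from `x` to `y'`. For `x, y ∈ r⁻¹ Z` the closed set
`W = [x, r x] ∪ [r x, r y]` lies in `r⁻¹ Z`, and every point of `W` is joined to `x` by an arc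
inside `W`. If `y ∉ W`, follow `[y, r y]` from `y` up to its first point in `W` and continue
inside `W` to `x`.
-/

/-- `A` is an arc in `X` joining `x` and `y`: the image of a continuous injection
from `[0,1]` sending `0` to `x` and `1` to `y`. -/
def IsArcBetween {X : Type*} [TopologicalSpace X] (A : Set X) (x y : X) : Prop :=
  ∃ f : unitInterval → X, Continuous f ∧ Function.Injective f ∧
    f 0 = x ∧ f 1 = y ∧ Set.range f = A

/-- `A` is an arc in `X` (a subspace homeomorphic to `[0,1]`). -/
def IsArc {X : Type*} [TopologicalSpace X] (A : Set X) : Prop :=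
  ∃ x y, IsArcBetween A x y

/-- `X` is uniquely arcwise connected: any two distinct points are joined by a unique arc. -/
def UniquelyArcwiseConnected (X : Type*) [TopologicalSpace X] : Prop :=
  ∀ x y : X, x ≠ y → ∃! A : Set X, IsArcBetween A x y

/-- A dendrite: a (metrizable) continuum which is locally connected and uniquely
arcwise connected. -/
def IsDendrite (X : Type*) [TopologicalSpace X] : Prop :=
  Nonempty X ∧ CompactSpace X ∧ ConnectedSpace X ∧
    TopologicalSpace.MetrizableSpace X ∧ LocallyConnectedSpace X ∧
    UniquelyArcwiseConnected X

/-- A subset `Y` of `X` is a tree: it is a dendrite (with the subspace topology)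
which is the union of finitely many arcs. -/
def IsTree {X : Type*} [TopologicalSpace X] (Y : Set X) : Prop :=
  IsDendrite Y ∧ ∃ (n : ℕ) (A : Fin n → Set X), (∀ i, IsArc (A i)) ∧ Y = ⋃ i, A i

/-- A subset `S` of `X` is arcwise connected: any two distinct points of `S`
are joined by an arc contained in `S`. -/
def ArcwiseConnectedSet {X : Type*} [TopologicalSpace X] (S : Set X) : Prop :=
  ∀ x ∈ S, ∀ y ∈ S, x ≠ y → ∃ A : Set X, IsArcBetween A x y ∧ A ⊆ S

/-- The convex hull `[S]` of `S`: the intersection of all arcwise connected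
subsets of `X` containing `S`. -/
def arcHull {X : Type*} [TopologicalSpace X] (S : Set X) : Set X :=
  ⋂₀ {C : Set X | S ⊆ C ∧ ArcwiseConnectedSet C}

/-- `Y` is the image of an oscillatory ray: a continuous injection `φ : [0, ∞) → X`
with image `Y` such that `⋂ n closure (φ [n, ∞))` contains at least two points. -/
def IsOscillatoryRaySet {X : Type*} [TopologicalSpace X] (Y : Set X) : Prop :=
  ∃ φ : ℝ → X, ContinuousOn φ (Set.Ici 0) ∧ Set.InjOn φ (Set.Ici 0) ∧
    φ '' Set.Ici 0 = Y ∧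
    ∃ u v : X, u ≠ v ∧
      ∀ n : ℕ, u ∈ closure (φ '' Set.Ici (n : ℝ)) ∧ v ∈ closure (φ '' Set.Ici (n : ℝ))

/-- `Y` is the image of a bi-sided-oscillatory line: a continuous injection
`ψ : (−∞, ∞) → X` with image `Y` such that both `⋂ n closure (ψ (−∞, −n])` and
`⋂ n closure (ψ [n, ∞))` contain at least two points. -/
def IsBiOscillatoryLineSet {X : Type*} [TopologicalSpace X] (Y : Set X) : Prop :=
  ∃ ψ : ℝ → X, Continuous ψ ∧ Function.Injective ψ ∧ Set.range ψ = Y ∧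
    (∃ u v : X, u ≠ v ∧
      ∀ n : ℕ, u ∈ closure (ψ '' Set.Iic (-(n : ℝ))) ∧
        v ∈ closure (ψ '' Set.Iic (-(n : ℝ)))) ∧
    (∃ u v : X, u ≠ v ∧
      ∀ n : ℕ, u ∈ closure (ψ '' Set.Ici (n : ℝ)) ∧ v ∈ closure (ψ '' Set.Ici (n : ℝ)))

/-- `y` is the quasi-retraction of `x` to `Y`: `y ∈ Y`, and either `x = y` (the case
`x ∈ Y`), or the arc `[x, y]` meets `Y` exactly in `{y}`. -/
def QuasiRetractPt {X : Type*} [TopologicalSpace X] (Y : Set X) (x y : X) : Prop :=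
  y ∈ Y ∧ (x = y ∨ ∃ A : Set X, IsArcBetween A x y ∧ A ∩ Y = {y})

open Set

namespace IsArcBetween

variable {X : Type*} [TopologicalSpace X] {A : Set X} {x y : X}

lemma left_mem (h : IsArcBetween A x y) : x ∈ A := by
  obtain ⟨f, -, -, rfl, -, rfl⟩ := h
  exact mem_range_self 0

lemma right_mem (h : IsArcBetween A x y) : y ∈ A := by
  obtain ⟨f, -, -, -, rfl, rfl⟩ := h
  exact mem_range_self 1

lemma ne (h : IsArcBetween A x y) : x ≠ y := by
  obtain ⟨f, -, hi, rfl, rfl, -⟩ := h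
  exact hi.ne zero_ne_one

lemma symm (h : IsArcBetween A x y) : IsArcBetween A y x := by
  obtain ⟨f, hc, hi, rfl, rfl, rfl⟩ := h
  refine ⟨f ∘ unitInterval.symm, hc.comp unitInterval.continuous_symm,
    hi.comp unitInterval.symm_bijective.injective, by simp, by simp, ?_⟩
  rw [range_comp, unitInterval.symm_bijective.surjective.range_eq, image_univ]

lemma isClosed [T2Space X] (h : IsArcBetween A x y) : IsClosed A := by
  obtain ⟨f, hc, -, -, -, rfl⟩ := h
  exact (isCompact_range hc).isClosed

lemma image {X' : Type*} [TopologicalSpace X'] {g : X → X'} (hg : Continuous g)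
    (hgi : Function.Injective g) (h : IsArcBetween A x y) :
    IsArcBetween (g '' A) (g x) (g y) := by
  obtain ⟨f, hc, hi, rfl, rfl, rfl⟩ := h
  exact ⟨g ∘ f, hg.comp hc, hgi.comp hi, rfl, rfl, range_comp g f⟩

lemma exists_Icc_param (h : IsArcBetween A x y) :
    ∃ g : ℝ → X, Continuous g ∧ InjOn g (Icc 0 1) ∧ g 0 = x ∧ g 1 = y ∧ g '' Icc 0 1 = A := by
  obtain ⟨f, hc, hi, h0, h1, rfl⟩ := h
  let γ : Path x y := ⟨⟨f, hc⟩, h0, h1⟩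
  refine ⟨γ.extend, γ.continuous_extend, fun s hs t ht hst => ?_, γ.extend_zero,
    γ.extend_one, γ.image_extend_of_subset subset_rfl⟩
  rw [γ.extend_apply hs, γ.extend_apply ht] at hst
  exact congrArg Subtype.val (hi hst)

end IsArcBetween

section Arcs

variable {X : Type*} [TopologicalSpace X]

lemma isArcBetween_image_uIcc {g : ℝ → X} {a b : ℝ} (hc : ContinuousOn g (uIcc a b))
    (hi : InjOn g (uIcc a b)) (hab : a ≠ b) : IsArcBetween (g '' uIcc a b) (g a) (g b) := by
  have hseg : ∀ t, Path.segment a b t ∈ uIcc a b := fun t => by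
    rw [← segment_eq_uIcc, ← Path.range_segment]
    exact mem_range_self t
  refine ⟨g ∘ Path.segment a b, hc.comp_continuous (Path.segment a b).continuous hseg,
    fun s t h => Path.segment_injective_of_ne hab (hi (hseg s) (hseg t) h), by simp, by simp, ?_⟩
  rw [range_comp, Path.range_segment, segment_eq_uIcc]

lemma arcwiseConnectedSet_image {g : ℝ → X} {S : Set ℝ} (hS : S.OrdConnected)
    (hc : ContinuousOn g S) (hi : InjOn g S) : ArcwiseConnectedSet (g '' S) := by
  rintro - ⟨s, hs, rfl⟩ - ⟨t, ht, rfl⟩ hst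
  have hsub : uIcc s t ⊆ S := hS.uIcc_subset hs ht
  exact ⟨g '' uIcc s t, isArcBetween_image_uIcc (hc.mono hsub) (hi.mono hsub)
    (fun h => hst (congrArg g h)), image_mono hsub⟩

lemma arcwiseConnectedSet_of_uniquelyArcwiseConnected {S : Set X}
    (h : UniquelyArcwiseConnected S) : ArcwiseConnectedSet S := by
  intro x hx y hy hxy
  obtain ⟨A, hA, -⟩ := h ⟨x, hx⟩ ⟨y, hy⟩ (fun h => hxy (congrArg Subtype.val h))
  exact ⟨_, hA.image continuous_subtype_val Subtype.val_injective, image_subset_iff.2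
    fun p _ => p.2⟩

lemma IsArcBetween.union {A B : Set X} {x y z : X} (hA : IsArcBetween A x y)
    (hB : IsArcBetween B y z) (hAB : A ∩ B ⊆ {y}) : IsArcBetween (A ∪ B) x z := by
  obtain ⟨f, hfc, hfi, hf0, hf1, rfl⟩ := hA
  obtain ⟨g, hgc, hgi, hg0, hg1, rfl⟩ := hB
  let γ₁ : Path x y := ⟨⟨f, hfc⟩, hf0, hf1⟩
  let γ₂ : Path y z := ⟨⟨g, hgc⟩, hg0, hg1⟩
  have hcross : ∀ s t, f s = g t → t = 0 := fun s t h => hgi <| by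
    rw [hg0, ← h]
    exact hAB ⟨⟨s, rfl⟩, t, h.symm⟩
  refine ⟨γ₁.trans γ₂, (γ₁.trans γ₂).continuous, fun s t hst => ?_, by simp, by simp,
    Path.trans_range γ₁ γ₂⟩
  simp only [Path.trans_apply] at hst
  split_ifs at hst with hs ht ht
  · have := congrArg Subtype.val (hfi hst)
    exact Subtype.ext (by simp only at this; linarith)
  · have := congrArg Subtype.val (hcross _ _ hst)
    simp only [Set.Icc.coe_zero] at this
    linarith
  · have := congrArg Subtype.val (hcross _ _ hst.symm)
    simp only [Set.Icc.coe_zero] at this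
    linarith
  · have := congrArg Subtype.val (hgi hst)
    exact Subtype.ext (by simp only at this; linarith)

end Arcs

def ArcStarShaped {X : Type*} [TopologicalSpace X] (x : X) (S : Set X) : Prop :=
  ∀ w ∈ S, w ≠ x → ∃ C, IsArcBetween C x w ∧ C ⊆ S

section ArcStarShaped

variable {X : Type*} [TopologicalSpace X] {A S T : Set X} {x y : X}

lemma arcStarShaped_singleton (x : X) : ArcStarShaped x {x} :=
  fun _ hw hwx => absurd hw hwx

lemma IsArcBetween.arcStarShaped (h : IsArcBetween A x y) : ArcStarShaped x A := by
  obtain ⟨g, hc, hi, rfl, -, rfl⟩ := h.exists_Icc_param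
  rintro - ⟨t, ht, rfl⟩ hne
  have hsub : uIcc 0 t ⊆ Icc 0 1 := ordConnected_Icc.uIcc_subset ⟨le_rfl, zero_le_one⟩ ht
  exact ⟨g '' uIcc 0 t, isArcBetween_image_uIcc hc.continuousOn (hi.mono hsub)
    (fun h => hne (congrArg g h).symm), image_mono hsub⟩

lemma ArcStarShaped.union {p : X} (hS : ArcStarShaped x S) (hT : ArcStarShaped p T)
    (hp : p ∈ S) (hST : S ∩ T ⊆ {p}) : ArcStarShaped x (S ∪ T) := by
  rintro w (hw | hw) hwx
  · obtain ⟨C, hC, hCS⟩ := hS w hw hwx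
    exact ⟨C, hC, hCS.trans subset_union_left⟩
  by_cases hwp : w = p
  · obtain ⟨C, hC, hCS⟩ := hS w (hwp ▸ hp) hwx
    exact ⟨C, hC, hCS.trans subset_union_left⟩
  obtain ⟨C₂, hC₂, hC₂T⟩ := hT w hw hwp
  by_cases hxp : x = p
  · subst hxp
    exact ⟨C₂, hC₂, hC₂T.trans subset_union_right⟩
  obtain ⟨C₁, hC₁, hC₁S⟩ := hS p hp (Ne.symm hxp)
  exact ⟨C₁ ∪ C₂, hC₁.union hC₂ ((inter_subset_inter hC₁S hC₂T).trans hST),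
    union_subset_union hC₁S hC₂T⟩

lemma IsArcBetween.exists_subarc_first_mem {K : Set X} (hA : IsArcBetween A x y)
    (hK : IsClosed K) (hy : y ∈ K) (hx : x ∉ K) :
    ∃ c ∈ K, ∃ C ⊆ A, IsArcBetween C x c ∧ C ∩ K ⊆ {c} := by
  obtain ⟨g, hc, hi, rfl, rfl, rfl⟩ := hA.exists_Icc_param
  have hT : IsCompact (Icc 0 1 ∩ g ⁻¹' K) := isCompact_Icc.inter_right (hK.preimage hc)
  obtain ⟨t, ⟨ht, htK⟩, hleast⟩ := hT.exists_isLeast ⟨1, ⟨zero_le_one, le_rfl⟩, hy⟩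
  have hsub : uIcc 0 t ⊆ Icc 0 1 := ordConnected_Icc.uIcc_subset ⟨le_rfl, zero_le_one⟩ ht
  refine ⟨g t, htK, g '' uIcc 0 t, image_mono hsub, isArcBetween_image_uIcc hc.continuousOn
    (hi.mono hsub) (fun h => hx (h ▸ htK)), ?_⟩
  rintro - ⟨⟨s, hs, rfl⟩, hsK⟩
  rw [uIcc_of_le ht.1] at hs
  rw [le_antisymm hs.2 (hleast ⟨hsub (by rwa [uIcc_of_le ht.1]), hsK⟩)]
  rfl

lemma ArcStarShaped.exists_arc {z : X} (hS : ArcStarShaped x S) (hSc : IsClosed S)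
    (hT : ArcStarShaped y T) (hz : z ∈ S ∩ T) (hy : y ∉ S) :
    ∃ C, IsArcBetween C x y ∧ C ⊆ S ∪ T := by
  obtain ⟨A, hA, hAT⟩ := hT z hz.2 (fun h => hy (h ▸ hz.1))
  obtain ⟨c, hcS, C₂, hC₂A, hC₂, hC₂S⟩ := hA.exists_subarc_first_mem hSc hz.1 hy
  by_cases hcx : c = x
  · subst hcx
    exact ⟨C₂, hC₂.symm, (hC₂A.trans hAT).trans subset_union_right⟩
  obtain ⟨C₁, hC₁, hC₁S⟩ := hS c hcS hcx
  refine ⟨C₁ ∪ C₂, hC₁.union hC₂.symm ?_, union_subset_union hC₁S (hC₂A.trans hAT)⟩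
  exact fun q hq => hC₂S ⟨hq.2, hC₁S hq.1⟩

lemma ArcwiseConnectedSet.exists_arcStarShaped [T2Space X] (hS : ArcwiseConnectedSet S)
    (hx : x ∈ S) (hy : y ∈ S) : ∃ B ⊆ S, IsClosed B ∧ ArcStarShaped x B ∧ y ∈ B := by
  by_cases hxy : x = y
  · subst hxy
    exact ⟨{x}, singleton_subset_iff.2 hx, isClosed_singleton, arcStarShaped_singleton x, rfl⟩
  obtain ⟨B, hB, hBS⟩ := hS x hx y hy hxy
  exact ⟨B, hBS, hB.isClosed, hB.arcStarShaped, hB.right_mem⟩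

end ArcStarShaped

section QuasiRetraction

variable {X : Type*} [TopologicalSpace X] {Y : Set X}

lemma IsTree.arcwiseConnectedSet (h : IsTree Y) : ArcwiseConnectedSet Y :=
  arcwiseConnectedSet_of_uniquelyArcwiseConnected h.1.2.2.2.2.2

lemma IsOscillatoryRaySet.arcwiseConnectedSet (h : IsOscillatoryRaySet Y) :
    ArcwiseConnectedSet Y := by
  obtain ⟨φ, hc, hi, rfl, -⟩ := h
  exact arcwiseConnectedSet_image ordConnected_Ici hc hi

lemma IsBiOscillatoryLineSet.arcwiseConnectedSet (h : IsBiOscillatoryLineSet Y) :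
    ArcwiseConnectedSet Y := by
  obtain ⟨ψ, hc, hi, rfl, -⟩ := h
  rw [← image_univ]
  exact arcwiseConnectedSet_image ordConnected_univ hc.continuousOn hi.injOn

namespace QuasiRetractPt

variable {x y y' : X}

lemma eq_of_mem (h : QuasiRetractPt Y x y) (hx : x ∈ Y) : y = x := by
  obtain ⟨-, rfl | ⟨A, hA, hAY⟩⟩ := h
  · rfl
  · exact (hAY.subset ⟨hA.left_mem, hx⟩).symm

lemma of_mem_arc {A : Set X} {p : X} (hA : IsArcBetween A x y) (hAY : A ∩ Y = {y})
    (hp : p ∈ A) : QuasiRetractPt Y p y := by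
  have hyY : y ∈ Y := (hAY.symm.subset rfl).2
  by_cases hpy : p = y
  · exact ⟨hyY, Or.inl hpy⟩
  obtain ⟨C, hC, hCA⟩ := hA.symm.arcStarShaped p hp hpy
  refine ⟨hyY, Or.inr ⟨C, hC.symm, subset_antisymm ?_ ?_⟩⟩
  · exact hAY ▸ inter_subset_inter_left Y hCA
  · exact singleton_subset_iff.2 ⟨hC.left_mem, hyY⟩

lemma unique (hX : UniquelyArcwiseConnected X) (hY : ArcwiseConnectedSet Y)
    (h : QuasiRetractPt Y x y) (h' : QuasiRetractPt Y x y') : y = y' := by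
  by_cases hx : x ∈ Y
  · rw [h.eq_of_mem hx, h'.eq_of_mem hx]
  obtain ⟨hyY, rfl | ⟨A, hA, hAY⟩⟩ := h
  · exact absurd hyY hx
  obtain ⟨hy'Y, rfl | ⟨A', hA', hA'Y⟩⟩ := h'
  · exact absurd hy'Y hx
  by_contra hyy'
  obtain ⟨B, hB, hBY⟩ := hY y hyY y' hy'Y hyy'
  have hAB : IsArcBetween (A ∪ B) x y' :=
    hA.union hB (hAY ▸ inter_subset_inter_right A hBY)
  have hAA' : A ∪ B = A' := (hX x y' hA'.ne).unique hAB hA'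
  exact hyy' (hA'Y.subset ⟨hAA' ▸ subset_union_right hB.left_mem, hyY⟩)

end QuasiRetractPt

lemma exists_quasiRetract_fiber [T2Space X] (hX : UniquelyArcwiseConnected X)
    (hY : ArcwiseConnectedSet Y) {r : X → X} (hr : ∀ x, QuasiRetractPt Y x (r x)) (x : X) :
    ∃ F, IsClosed F ∧ ArcStarShaped x F ∧ r x ∈ F ∧ (∀ p ∈ F, r p = r x) ∧ F ∩ Y ⊆ {r x} := by
  obtain ⟨-, hxr | ⟨A, hA, hAY⟩⟩ := hr x
  · refine ⟨{x}, isClosed_singleton, arcStarShaped_singleton x, hxr.symm, ?_, ?_⟩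
    · rintro p rfl
      rfl
    · exact hxr ▸ inter_subset_left
  · exact ⟨A, hA.isClosed, hA.arcStarShaped, hA.right_mem,
      fun p hp => (hr p).unique hX hY (.of_mem_arc hA hAY hp), hAY.subset⟩

end QuasiRetraction

theorem quasiRetraction_preimage_arcwiseConnected
    {X : Type*} [MetricSpace X]
    (hX : UniquelyArcwiseConnected X) (Y : Set X)
    (hY : IsTree Y ∨ IsOscillatoryRaySet Y ∨ IsBiOscillatoryLineSet Y)
    (r : X → X) (hr : ∀ x : X, QuasiRetractPt Y x (r x))
    (Z : Set X) (hZY : Z ⊆ Y) (hZ : ArcwiseConnectedSet Z) :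
    ArcwiseConnectedSet (r ⁻¹' Z) := by
  have hYc : ArcwiseConnectedSet Y := by
    rcases hY with h | h | h
    exacts [h.arcwiseConnectedSet, h.arcwiseConnectedSet, h.arcwiseConnectedSet]
  intro x hx y hy hxy
  obtain ⟨Fx, hFx_closed, hFx_star, hrx, hFx_r, hFxY⟩ := exists_quasiRetract_fiber hX hYc hr x
  obtain ⟨Fy, -, hFy_star, hry, hFy_r, -⟩ := exists_quasiRetract_fiber hX hYc hr y
  obtain ⟨B, hBZ, hB_closed, hB_star, hryB⟩ := hZ.exists_arcStarShaped hx hy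
  have hW : ArcStarShaped x (Fx ∪ B) :=
    hFx_star.union hB_star hrx fun p hp => hFxY ⟨hp.1, hZY (hBZ hp.2)⟩
  have hWZ : Fx ∪ B ∪ Fy ⊆ r ⁻¹' Z := by
    rintro p ((hp | hp) | hp)
    · rw [mem_preimage, hFx_r p hp]; exact hx
    · rw [mem_preimage, (hr p).eq_of_mem (hZY (hBZ hp))]; exact hBZ hp
    · rw [mem_preimage, hFy_r p hp]; exact hy
  by_cases hyW : y ∈ Fx ∪ B
  · obtain ⟨C, hC, hCW⟩ := hW y hyW (Ne.symm hxy)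
    exact ⟨C, hC, hCW.trans (subset_union_left.trans hWZ)⟩
  · obtain ⟨C, hC, hCW⟩ := hW.exists_arc (hFx_closed.union hB_closed) hFy_star
      ⟨subset_union_right hryB, hry⟩ hyW
    exact ⟨C, hC, hCW.trans hWZ⟩
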